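/- Let U ⊆ ℂ be open, let λ ∈ ℂ, and suppose every t ∈ U satisfies t ≠ 0 and t ≠ λ. Let c₁, c₂ : U → ℂ, let y : U → ℂ be twice differentiable and satisfy y''(t) + c₁(t)·y'(t) + c₂(t)·y(t) = 0 for all t ∈ U, and let w : U → ℂ be differentiable with w(t)²·t·(t−λ) = 1 for all t ∈ U. Then z := w·y is twice differentiable on U and satisfies z''(t) + α(t)·z'(t) + β(t)·z(t) = 0 for all t ∈ U, where α(t) = c₁(t) + (2t−λ)/(t(t−λ)) and β(t) = c₂(t) + c₁(t)·(2t−λ)/(2t(t−λ)) − λ²/(4t²(t−λ)²). -/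

import Mathlib

/-!
If `w' = -q w`, the gauge transformation `z = w y` turns `y'' + c₁ y' + c₂ y = 0` into
`z'' + (c₁ + 2q) z' + (c₂ + c₁ q + q² + q') z = 0`. Differentiating `w² t (t - λ) = 1` shows that a
branch `w` of `(t (t - λ))^{-1/2}` satisfies this with `q = (1/t + 1/(t - λ)) / 2`, and then
`q² + q' = -(1/t - 1/(t - λ))² / 4 = -λ² / (4 t² (t - λ)²)`.
-/

open Filter Topology

section GaugeTransform

variable {𝕜 : Type*} [NontriviallyNormedField 𝕜] {w y q : 𝕜 → 𝕜} {t q' lam : 𝕜}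

theorem hasDerivAt_neg_mul_of_sq_mul_eq_one [NeZero (2 : 𝕜)] {p : 𝕜 → 𝕜} {p' : 𝕜}
    (hw : DifferentiableAt 𝕜 w t) (hp : HasDerivAt p p' t) (h : ∀ᶠ s in 𝓝 t, w s ^ 2 * p s = 1) :
    HasDerivAt w (-(p' / (2 * p t) * w t)) t := by
  have hpt : w t ^ 2 * p t = 1 := h.self_of_nhds
  have hp0 : p t ≠ 0 := right_ne_zero_of_mul_eq_one hpt
  have hw0 : w t ≠ 0 := pow_ne_zero_iff two_ne_zero |>.mp (left_ne_zero_of_mul_eq_one hpt)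
  have hderiv : w t * (2 * deriv w t * p t + w t * p') = 0 := by
    have := ((hw.hasDerivAt.fun_pow 2).fun_mul hp).unique
      ((hasDerivAt_const t (1 : 𝕜)).congr_of_eventuallyEq h)
    linear_combination this
  refine hw.hasDerivAt.congr_deriv ?_
  field_simp
  linear_combination (mul_eq_zero.mp hderiv).resolve_left hw0

theorem hasDerivAt_mul_of_hasDerivAt_neg_mul (hw : HasDerivAt w (-(q t * w t)) t)
    (hy : DifferentiableAt 𝕜 y t) :
    HasDerivAt (fun s => w s * y s) (w t * (deriv y t - q t * y t)) t :=
  (hw.fun_mul hy.hasDerivAt).congr_deriv (by ring)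

theorem hasDerivAt_deriv_mul_of_hasDerivAt_neg_mul
    (hw : ∀ᶠ s in 𝓝 t, HasDerivAt w (-(q s * w s)) s) (hy : ∀ᶠ s in 𝓝 t, DifferentiableAt 𝕜 y s)
    (hy' : DifferentiableAt 𝕜 (deriv y) t) (hq : HasDerivAt q q' t) :
    HasDerivAt (deriv fun s => w s * y s)
      (w t * (deriv (deriv y) t - 2 * q t * deriv y t + (q t ^ 2 - q') * y t)) t := by
  have hz' : deriv (fun s => w s * y s) =ᶠ[𝓝 t] fun s => w s * (deriv y s - q s * y s) := by
    filter_upwards [hw, hy] with s hws hys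
    exact (hasDerivAt_mul_of_hasDerivAt_neg_mul hws hys).deriv
  refine HasDerivAt.congr_of_eventuallyEq ?_ hz'
  exact (hw.self_of_nhds.fun_mul
    (hy'.hasDerivAt.fun_sub (hq.fun_mul hy.self_of_nhds.hasDerivAt))).congr_deriv (by ring)

theorem deriv_deriv_mul_add_of_hasDerivAt_neg_mul
    (hw : ∀ᶠ s in 𝓝 t, HasDerivAt w (-(q s * w s)) s) (hy : ∀ᶠ s in 𝓝 t, DifferentiableAt 𝕜 y s)
    (hy' : DifferentiableAt 𝕜 (deriv y) t) (hq : HasDerivAt q q' t) {c₁ c₂ : 𝕜}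
    (hODE : deriv (deriv y) t + c₁ * deriv y t + c₂ * y t = 0) :
    deriv (deriv fun s => w s * y s) t + (c₁ + 2 * q t) * deriv (fun s => w s * y s) t
      + (c₂ + c₁ * q t + q t ^ 2 + q') * (w t * y t) = 0 := by
  rw [(hasDerivAt_deriv_mul_of_hasDerivAt_neg_mul hw hy hy' hq).deriv,
    (hasDerivAt_mul_of_hasDerivAt_neg_mul hw.self_of_nhds hy.self_of_nhds).deriv]
  linear_combination w t * hODE

/-- The logarithmic derivative of `(t (t - λ))^{1/2}`. -/
def twistGauge (lam t : 𝕜) : 𝕜 := (t⁻¹ + (t - lam)⁻¹) / 2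

theorem hasDerivAt_twistGauge (h0 : t ≠ 0) (hl : t ≠ lam) :
    HasDerivAt (twistGauge lam) (-((t ^ 2)⁻¹ + ((t - lam) ^ 2)⁻¹) / 2) t := by
  have hl' : t - lam ≠ 0 := sub_ne_zero.mpr hl
  exact (((hasDerivAt_inv h0).fun_add
    (((hasDerivAt_id' t).sub_const lam).fun_inv hl')).div_const 2).congr_deriv (by ring)

theorem twistGauge_sq_add_deriv [CharZero 𝕜] (h0 : t ≠ 0) (hl : t ≠ lam) :
    twistGauge lam t ^ 2 + -((t ^ 2)⁻¹ + ((t - lam) ^ 2)⁻¹) / 2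
      = -(lam ^ 2 / (4 * t ^ 2 * (t - lam) ^ 2)) := by
  have hl' : t - lam ≠ 0 := sub_ne_zero.mpr hl
  simp only [twistGauge]
  field_simp
  ring

theorem twistGauge_eq_div [NeZero (2 : 𝕜)] (h0 : t ≠ 0) (hl : t ≠ lam) :
    twistGauge lam t = (2 * t - lam) / (2 * t * (t - lam)) := by
  have hl' : t - lam ≠ 0 := sub_ne_zero.mpr hl
  simp only [twistGauge]
  field_simp
  ring

theorem hasDerivAt_neg_twistGauge_mul [NeZero (2 : 𝕜)] (hw : DifferentiableAt 𝕜 w t)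
    (h : ∀ᶠ s in 𝓝 t, w s ^ 2 * s * (s - lam) = 1) :
    HasDerivAt w (-(twistGauge lam t * w t)) t := by
  have hp : HasDerivAt (fun s => s * (s - lam)) (2 * t - lam) t :=
    ((hasDerivAt_id' t).fun_mul ((hasDerivAt_id' t).sub_const lam)).congr_deriv (by ring)
  have h' : ∀ᶠ s in 𝓝 t, w s ^ 2 * (s * (s - lam)) = 1 := by
    simpa only [mul_assoc] using h
  have ht : t * (t - lam) ≠ 0 := right_ne_zero_of_mul_eq_one h'.self_of_nhds
  rw [twistGauge_eq_div (left_ne_zero_of_mul ht) (sub_ne_zero.mp (right_ne_zero_of_mul ht))]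
  simpa only [mul_assoc] using hasDerivAt_neg_mul_of_sq_mul_eq_one hw hp h'

end GaugeTransform

theorem twist_substitution (U : Set ℂ) (hU : IsOpen U) (lam : ℂ)
    (hUavoid : ∀ t ∈ U, t ≠ 0 ∧ t ≠ lam)
    (c₁ c₂ y w : ℂ → ℂ)
    (hy1 : ∀ t ∈ U, DifferentiableAt ℂ y t)
    (hy2 : ∀ t ∈ U, DifferentiableAt ℂ (deriv y) t)
    (hODE : ∀ t ∈ U, deriv (deriv y) t + c₁ t * deriv y t + c₂ t * y t = 0)
    (hw : ∀ t ∈ U, DifferentiableAt ℂ w t)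
    (hwsq : ∀ t ∈ U, (w t) ^ 2 * t * (t - lam) = 1) :
    (∀ t ∈ U, DifferentiableAt ℂ (fun s => w s * y s) t) ∧
    (∀ t ∈ U, DifferentiableAt ℂ (deriv (fun s => w s * y s)) t) ∧
    (∀ t ∈ U,
      deriv (deriv (fun s => w s * y s)) t
        + (c₁ t + (2 * t - lam) / (t * (t - lam))) * deriv (fun s => w s * y s) t
        + (c₂ t + c₁ t * (2 * t - lam) / (2 * t * (t - lam))
            - lam ^ 2 / (4 * t ^ 2 * (t - lam) ^ 2)) * (w t * y t) = 0) := by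
  have hwq : ∀ t ∈ U, HasDerivAt w (-(twistGauge lam t * w t)) t := fun t ht =>
    hasDerivAt_neg_twistGauge_mul (hw t ht) (eventually_of_mem (hU.mem_nhds ht) hwsq)
  have hwq_nhds : ∀ t ∈ U, ∀ᶠ s in 𝓝 t, HasDerivAt w (-(twistGauge lam s * w s)) s :=
    fun t ht => eventually_of_mem (hU.mem_nhds ht) hwq
  have hy1_nhds : ∀ t ∈ U, ∀ᶠ s in 𝓝 t, DifferentiableAt ℂ y s :=
    fun t ht => eventually_of_mem (hU.mem_nhds ht) hy1
  refine ⟨fun t ht => (hasDerivAt_mul_of_hasDerivAt_neg_mul (hwq t ht) (hy1 t ht)).differentiableAt,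
    fun t ht => ?_, fun t ht => ?_⟩ <;> obtain ⟨h0, hl⟩ := hUavoid t ht
  · exact (hasDerivAt_deriv_mul_of_hasDerivAt_neg_mul (hwq_nhds t ht) (hy1_nhds t ht) (hy2 t ht)
      (hasDerivAt_twistGauge h0 hl)).differentiableAt
  have hα : (2 * t - lam) / (t * (t - lam)) = 2 * twistGauge lam t := by
    rw [twistGauge_eq_div h0 hl]
    field_simp [sub_ne_zero.mpr hl]
  linear_combination deriv_deriv_mul_add_of_hasDerivAt_neg_mul (hwq_nhds t ht) (hy1_nhds t ht)
    (hy2 t ht) (hasDerivAt_twistGauge h0 hl) (hODE t ht)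
    + deriv (fun s => w s * y s) t * hα - c₁ t * (w t * y t) * twistGauge_eq_div h0 hl
    - (w t * y t) * twistGauge_sq_add_deriv h0 hl
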